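/- Let γ > 1 and ℓ := 2/(γ−1). For every (V₋, C₋) ∈ ℝ² with 0 < C₋ < 1+V₋, there exists a unique (V₊, C₊) ∈ ℝ² with 0 < 1+V₊ < C₊ such that the pair satisfies the self-similar Rankine–Hugoniot relations. Conversely, for every (V₊, C₊) with 0 < 1+V₊ < C₊ there exists a unique (V₋, C₋) with 0 < C₋ < 1+V₋ such that the pair satisfies the self-similar Rankine–Hugoniot relations. (These are admissible self-similar 1-shocks in the case ξ̄/λ < 0, with left states in T¹₋ := {0 < C < 1+V} and right states in T¹₊ := {0 < 1+V < C}.) -/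

import Mathlib

/-!
Write `m = C^ℓ (1+V)` for the mass flux. On a level set of `m` the momentum flux
`C^ℓ ((1+V)² + C²/γ)` becomes `f(C) = m² C^(-ℓ) + C^(ℓ+2)/γ`. Since `γℓ = ℓ+2`, `f'(C)` has
the sign of `C^(ℓ+1) - m`, so `f` decreases strictly up to the sonic point `s = m^(1/(ℓ+1))`,
where `C = 1+V`, and increases strictly after it, with `f → ∞` at `0` and at `∞`. A state lies
in `T¹₋` exactly when `C < s` and in `T¹₊` exactly when `C > s`; so the Rankine–Hugoniot partner
of a state is the solution of `f(C') = f(C)` on the other branch of `f`, which exists by the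
intermediate value theorem and is unique by strict monotonicity.
-/

/-- The self-similar Rankine–Hugoniot relations for the 1-d isentropic Euler
system (with `ℓ = 2/(γ−1)`), relating a left state `Pm = (V₋, C₋)` and a right
state `Pp = (V₊, C₊)`. -/
def RH (γ : ℝ) (Pm Pp : ℝ × ℝ) : Prop :=
  |Pm.2| ^ (2 / (γ - 1)) * (1 + Pm.1) = |Pp.2| ^ (2 / (γ - 1)) * (1 + Pp.1) ∧
  |Pm.2| ^ (2 / (γ - 1)) * ((1 + Pm.1) ^ 2 + Pm.2 ^ 2 / γ)
    = |Pp.2| ^ (2 / (γ - 1)) * ((1 + Pp.1) ^ 2 + Pp.2 ^ 2 / γ)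

open Real Set Filter Topology

theorem StrictMonoOn.existsUnique_gt_eq_of_tendsto_atTop {f : ℝ → ℝ} {s y : ℝ}
    (hf : StrictMonoOn f (Ici s)) (hcont : ContinuousOn f (Ici s))
    (htop : Tendsto f atTop atTop) (hy : f s < y) : ∃! c, s < c ∧ f c = y := by
  obtain ⟨X, hX⟩ := eventually_atTop.mp (htop.eventually_ge_atTop y)
  obtain ⟨c, hc, rfl⟩ := intermediate_value_Icc (le_max_left s X)
    (hcont.mono Icc_subset_Ici_self) ⟨hy.le, hX _ (le_max_right s X)⟩
  have hsc : s < c := hc.1.lt_of_ne (by rintro rfl; exact hy.ne rfl)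
  exact ⟨c, ⟨hsc, rfl⟩, fun c' ⟨hc', he⟩ => hf.injOn hc'.le hsc.le he⟩

theorem StrictAntiOn.existsUnique_mem_Ioo_eq_of_tendsto_nhdsGT {f : ℝ → ℝ} {a s y : ℝ}
    (hf : StrictAntiOn f (Ioc a s)) (hcont : ContinuousOn f (Ioc a s))
    (hbot : Tendsto f (𝓝[>] a) atTop) (has : a < s) (hy : f s < y) :
    ∃! c, c ∈ Ioo a s ∧ f c = y := by
  obtain ⟨ε, hyε, hε⟩ := ((hbot.eventually_ge_atTop y).and (Ioo_mem_nhdsGT has)).exists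
  obtain ⟨c, hc, rfl⟩ := intermediate_value_Icc' hε.2.le
    (hcont.mono (Icc_subset_Ioc_iff hε.2.le |>.mpr ⟨hε.1, le_rfl⟩)) ⟨hy.le, hyε⟩
  have hcs : c < s := hc.2.lt_of_ne (by rintro rfl; exact hy.ne rfl)
  have hac : c ∈ Ioo a s := ⟨hε.1.trans_le hc.1, hcs⟩
  exact ⟨c, ⟨hac, rfl⟩, fun c' ⟨hc', he⟩ => hf.injOn (Ioo_subset_Ioc_self hc')
    (Ioo_subset_Ioc_self hac) he⟩

/-- At fixed mass flux `m = C^l (1+V)`, the momentum flux `C^l ((1+V)² + C²/γ)` as a function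
of `C`. -/
noncomputable def momentumFlux (γ l m c : ℝ) : ℝ := m ^ 2 * c ^ (-l) + c ^ (l + 2) / γ

/-- The value of `C` where the mass-flux level `C^l (1+V) = m` crosses the sonic line `C = 1+V`. -/
noncomputable def sonicPoint (l m : ℝ) : ℝ := m ^ (l + 1)⁻¹

theorem momentum_eq_momentumFlux (γ l u : ℝ) {C : ℝ} (hC : 0 < C) :
    C ^ l * (u ^ 2 + C ^ 2 / γ) = momentumFlux γ l (C ^ l * u) C := by
  rw [momentumFlux, rpow_add hC, rpow_neg hC.le, rpow_two]
  have : C ^ l ≠ 0 := (rpow_pos_of_pos hC l).ne'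
  field_simp

theorem continuousOn_momentumFlux (γ l m : ℝ) : ContinuousOn (momentumFlux γ l m) (Ioi 0) :=
  fun _ hx => ((continuousAt_const.mul (continuousAt_rpow_const _ _ (.inl (ne_of_gt hx)))).add
    ((continuousAt_rpow_const _ _ (.inl (ne_of_gt hx))).div_const γ)).continuousWithinAt

theorem hasDerivAt_momentumFlux {γ l m x : ℝ} (hl : 0 < l) (hγl : γ * l = l + 2) (hx : 0 < x) :
    HasDerivAt (momentumFlux γ l m) (l * ((x ^ (l + 1)) ^ 2 - m ^ 2) / x ^ (l + 1)) x := by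
  have hγ : γ ≠ 0 := by rintro rfl; linarith
  refine (((hasDerivAt_rpow_const (.inl hx.ne')).const_mul (m ^ 2)).add
    ((hasDerivAt_rpow_const (.inl hx.ne')).div_const γ)).congr_deriv ?_
  have hx' : x ^ (l + 1) ≠ 0 := (rpow_pos_of_pos hx _).ne'
  rw [show -l - 1 = -(l + 1) by ring, show l + 2 - 1 = l + 1 by ring, rpow_neg hx.le, ← hγl]
  field_simp
  ring

theorem sonicPoint_pos {l m : ℝ} (hm : 0 < m) : 0 < sonicPoint l m := rpow_pos_of_pos hm _

theorem sonicPoint_lt_iff {l m c : ℝ} (hl : 0 < l + 1) (hm : 0 < m) (hc : 0 < c) :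
    sonicPoint l m < c ↔ m < c ^ (l + 1) :=
  rpow_inv_lt_iff_of_pos hm.le hc.le hl

theorem lt_sonicPoint_iff {l m c : ℝ} (hl : 0 < l + 1) (hm : 0 < m) (hc : 0 < c) :
    c < sonicPoint l m ↔ c ^ (l + 1) < m :=
  lt_rpow_inv_iff_of_pos hc.le hm.le hl

theorem lt_iff_lt_sonicPoint {l C u : ℝ} (hl : 0 < l + 1) (hC : 0 < C) (hu : 0 < u) :
    C < u ↔ C < sonicPoint l (C ^ l * u) := by
  rw [lt_sonicPoint_iff hl (by positivity) hC, rpow_add_one hC.ne',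
    mul_lt_mul_iff_right₀ (rpow_pos_of_pos hC l)]

theorem lt_iff_sonicPoint_lt {l C u : ℝ} (hl : 0 < l + 1) (hC : 0 < C) (hu : 0 < u) :
    u < C ↔ sonicPoint l (C ^ l * u) < C := by
  rw [sonicPoint_lt_iff hl (by positivity) hC, rpow_add_one hC.ne',
    mul_lt_mul_iff_right₀ (rpow_pos_of_pos hC l)]

section
variable {γ l m : ℝ} (hl : 0 < l) (hγl : γ * l = l + 2) (hm : 0 < m)
include hl hγl hm

theorem strictMonoOn_momentumFlux : StrictMonoOn (momentumFlux γ l m) (Ici (sonicPoint l m)) := by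
  have hs := sonicPoint_pos (l := l) hm
  refine strictMonoOn_of_deriv_pos (convex_Ici _)
    ((continuousOn_momentumFlux γ l m).mono fun x hx => hs.trans_le hx) fun x hx => ?_
  rw [interior_Ici, mem_Ioi] at hx
  have hx0 : 0 < x := hs.trans hx
  have hmx := (sonicPoint_lt_iff (by linarith) hm hx0).mp hx
  have := rpow_pos_of_pos hx0 (l + 1)
  rw [(hasDerivAt_momentumFlux hl hγl hx0).deriv]
  exact div_pos (mul_pos hl (by nlinarith)) this

theorem strictAntiOn_momentumFlux :
    StrictAntiOn (momentumFlux γ l m) (Ioc 0 (sonicPoint l m)) := by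
  refine strictAntiOn_of_deriv_neg (convex_Ioc _ _)
    ((continuousOn_momentumFlux γ l m).mono Ioc_subset_Ioi_self) fun x hx => ?_
  rw [interior_Ioc] at hx
  have hmx := (lt_sonicPoint_iff (by linarith) hm hx.1).mp hx.2
  have := rpow_pos_of_pos hx.1 (l + 1)
  rw [(hasDerivAt_momentumFlux hl hγl hx.1).deriv]
  exact div_neg_of_neg_of_pos (mul_neg_of_pos_of_neg hl (by nlinarith)) this

end

theorem tendsto_momentumFlux_atTop {γ l : ℝ} (hγ : 0 < γ) (hl : 0 < l + 2) (m : ℝ) :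
    Tendsto (momentumFlux γ l m) atTop atTop :=
  tendsto_atTop_add_left_of_le' _ 0
    ((eventually_gt_atTop 0).mono fun _ hc => by positivity)
    ((tendsto_rpow_atTop hl).atTop_div_const hγ)

theorem tendsto_momentumFlux_nhdsGT_zero {γ l m : ℝ} (hγ : 0 < γ) (hl : 0 < l) (hm : m ≠ 0) :
    Tendsto (momentumFlux γ l m) (𝓝[>] 0) atTop :=
  tendsto_atTop_add_right_of_le' _ 0
    ((tendsto_rpow_neg_nhdsGT_zero (neg_lt_zero.mpr hl)).const_mul_atTop (by positivity))
    (eventually_nhdsWithin_of_forall fun c (hc : 0 < c) => by positivity)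

theorem RH.symm {γ : ℝ} {P Q : ℝ × ℝ} (h : RH γ P Q) : RH γ Q P :=
  ⟨h.1.symm, h.2.symm⟩

theorem rh_iff {γ V₁ C₁ V₂ C₂ : ℝ} (hC₁ : 0 < C₁) (hC₂ : 0 < C₂) :
    RH γ (V₁, C₁) (V₂, C₂) ↔
      C₂ ^ (2 / (γ - 1)) * (1 + V₂) = C₁ ^ (2 / (γ - 1)) * (1 + V₁) ∧
      momentumFlux γ (2 / (γ - 1)) (C₁ ^ (2 / (γ - 1)) * (1 + V₁)) C₂ =
        momentumFlux γ (2 / (γ - 1)) (C₁ ^ (2 / (γ - 1)) * (1 + V₁)) C₁ := by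
  simp only [RH, abs_of_pos hC₁, abs_of_pos hC₂, momentum_eq_momentumFlux γ _ _ hC₁,
    momentum_eq_momentumFlux γ _ _ hC₂]
  constructor
  · rintro ⟨h, h'⟩
    rw [h] at h' ⊢
    exact ⟨rfl, h'.symm⟩
  · rintro ⟨h, h'⟩
    rw [h]
    exact ⟨rfl, h'.symm⟩

theorem mul_two_div_sub_one {γ : ℝ} (hγ : γ ≠ 1) :
    γ * (2 / (γ - 1)) = 2 / (γ - 1) + 2 := by
  have : γ - 1 ≠ 0 := sub_ne_zero.mpr hγ
  field_simp
  ring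

theorem existsUnique_rh_right_of_left {γ Vm Cm : ℝ} (hγ : 1 < γ) (hC : 0 < Cm)
    (hCV : Cm < 1 + Vm) :
    ∃! Pp : ℝ × ℝ, (0 < 1 + Pp.1 ∧ 1 + Pp.1 < Pp.2) ∧ RH γ (Vm, Cm) Pp := by
  set l := 2 / (γ - 1)
  have hl : 0 < l := div_pos two_pos (sub_pos.mpr hγ)
  have hγl : γ * l = l + 2 := mul_two_div_sub_one hγ.ne'
  have hl1 : 0 < l + 1 := by linarith
  have hV : 0 < 1 + Vm := hC.trans hCV
  set m := Cm ^ l * (1 + Vm)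
  have hm : 0 < m := mul_pos (rpow_pos_of_pos hC l) hV
  have hs : 0 < sonicPoint l m := sonicPoint_pos hm
  have hCs : Cm < sonicPoint l m := (lt_iff_lt_sonicPoint hl1 hC hV).mp hCV
  obtain ⟨c, ⟨hsc, hfc⟩, huniq⟩ :=
    (strictMonoOn_momentumFlux hl hγl hm).existsUnique_gt_eq_of_tendsto_atTop
      ((continuousOn_momentumFlux γ l m).mono fun x hx => hs.trans_le hx)
      (tendsto_momentumFlux_atTop (by linarith) (by linarith) m)
      (strictAntiOn_momentumFlux hl hγl hm ⟨hC, hCs.le⟩ ⟨hs, le_rfl⟩ hCs)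
  have hc : 0 < c := hs.trans hsc
  have hmc : c ^ l * (c ^ (-l) * m) = m := by
    rw [rpow_neg hc.le, mul_inv_cancel_left₀ (rpow_pos_of_pos hc l).ne']
  refine ⟨(c ^ (-l) * m - 1, c), ⟨?_, ?_⟩, ?_⟩
  · rw [add_sub_cancel]
    exact ⟨by positivity, (lt_iff_sonicPoint_lt hl1 hc (by positivity)).mpr (by rwa [hmc])⟩
  · exact (rh_iff hC hc).mpr ⟨by rw [add_sub_cancel, hmc], hfc⟩
  · rintro ⟨V, C⟩ ⟨⟨hV, hVC⟩, hRH⟩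
    have hC' : 0 < C := hV.trans hVC
    obtain ⟨hmC, hfC⟩ :
        C ^ l * (1 + V) = m ∧ momentumFlux γ l m C = momentumFlux γ l m Cm :=
      (rh_iff hC hC').mp hRH
    obtain rfl : C = c := huniq C ⟨hmC ▸ (lt_iff_sonicPoint_lt hl1 hC' hV).mp hVC, hfC⟩
    refine Prod.ext ?_ rfl
    rw [← hmC, rpow_neg hC'.le, inv_mul_cancel_left₀ (rpow_pos_of_pos hC' l).ne']
    ring

theorem existsUnique_rh_left_of_right {γ Vp Cp : ℝ} (hγ : 1 < γ) (hV : 0 < 1 + Vp)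
    (hVC : 1 + Vp < Cp) :
    ∃! Pm : ℝ × ℝ, (0 < Pm.2 ∧ Pm.2 < 1 + Pm.1) ∧ RH γ Pm (Vp, Cp) := by
  set l := 2 / (γ - 1)
  have hl : 0 < l := div_pos two_pos (sub_pos.mpr hγ)
  have hγl : γ * l = l + 2 := mul_two_div_sub_one hγ.ne'
  have hl1 : 0 < l + 1 := by linarith
  have hC : 0 < Cp := hV.trans hVC
  set m := Cp ^ l * (1 + Vp)
  have hm : 0 < m := mul_pos (rpow_pos_of_pos hC l) hV
  have hs : 0 < sonicPoint l m := sonicPoint_pos hm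
  have hsC : sonicPoint l m < Cp := (lt_iff_sonicPoint_lt hl1 hC hV).mp hVC
  obtain ⟨c, ⟨⟨hc, hcs⟩, hfc⟩, huniq⟩ :=
    (strictAntiOn_momentumFlux hl hγl hm).existsUnique_mem_Ioo_eq_of_tendsto_nhdsGT
      ((continuousOn_momentumFlux γ l m).mono Ioc_subset_Ioi_self)
      (tendsto_momentumFlux_nhdsGT_zero (by linarith) hl hm.ne') hs
      (strictMonoOn_momentumFlux hl hγl hm self_mem_Ici hsC.le hsC)
  have hmc : c ^ l * (c ^ (-l) * m) = m := by
    rw [rpow_neg hc.le, mul_inv_cancel_left₀ (rpow_pos_of_pos hc l).ne']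
  refine ⟨(c ^ (-l) * m - 1, c), ⟨?_, ?_⟩, ?_⟩
  · rw [add_sub_cancel]
    exact ⟨hc, (lt_iff_lt_sonicPoint hl1 hc (by positivity)).mpr (by rwa [hmc])⟩
  · exact ((rh_iff hC hc).mpr ⟨by rw [add_sub_cancel, hmc], hfc⟩).symm
  · rintro ⟨V, C⟩ ⟨⟨hC', hCV⟩, hRH⟩
    obtain ⟨hmC, hfC⟩ :
        C ^ l * (1 + V) = m ∧ momentumFlux γ l m C = momentumFlux γ l m Cp :=
      (rh_iff hC hC').mp hRH.symm
    obtain rfl : C = c :=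
      huniq C ⟨⟨hC', hmC ▸ (lt_iff_lt_sonicPoint hl1 hC' (hC'.trans hCV)).mp hCV⟩, hfC⟩
    refine Prod.ext ?_ rfl
    rw [← hmC, rpow_neg hC'.le, inv_mul_cancel_left₀ (rpow_pos_of_pos hC' l).ne']
    ring

/-- admissible self-similar 1-shocks with `ξ̄/λ < 0`: each left
state in `T¹₋ = {0 < C < 1+V}` has a unique right state in `T¹₊ = {0 < 1+V < C}`
satisfying the Rankine–Hugoniot relations, and conversely. -/
theorem stmt_16 (γ : ℝ) (hγ : 1 < γ) :
    (∀ Vm Cm : ℝ, 0 < Cm → Cm < 1 + Vm →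
      ∃! Pp : ℝ × ℝ, (0 < 1 + Pp.1 ∧ 1 + Pp.1 < Pp.2) ∧ RH γ (Vm, Cm) Pp) ∧
    (∀ Vp Cp : ℝ, 0 < 1 + Vp → 1 + Vp < Cp →
      ∃! Pm : ℝ × ℝ, (0 < Pm.2 ∧ Pm.2 < 1 + Pm.1) ∧ RH γ Pm (Vp, Cp)) :=
  ⟨fun _ _ => existsUnique_rh_right_of_left hγ, fun _ _ => existsUnique_rh_left_of_right hγ⟩
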